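/- arXiv:1406.3597 — 2 statements merged into one kernel-verified Lean document; each statement's English description precedes it below -/
import Mathlib

section
/- For an even positive integer n, the maximum of θ(l) = l·H_{n−l} + (n−l)·H_l over integers 0 ≤ l ≤ n is n·H_{n/2}, attained at l = n/2. -/
open MeasureTheory Finset Filter

/-!
Write `F(a, b) = a H_b + b H_a`, so that `θ(l) = F(l, n - l)`. For `a ≤ b`, moving one unit
from the larger argument to the smaller one does not decrease `F`: the change is
`b/(a+1) - a/(b+1) + H_b - H_a ≥ 0`. Repeating this from `(l, n - l)` reaches the balanced
point `(n/2, n/2)`, where `F = n H_{n/2}`.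
-/

noncomputable def harmonicR (n : ℕ) : ℝ := ∑ i ∈ Finset.range n, (1 : ℝ) / (i + 1)

noncomputable def Hext (k : ℝ) : ℝ := ∫ x in (0:ℝ)..1, (1 - x ^ k) / (1 - x)

lemma harmonicR_succ (m : ℕ) : harmonicR (m + 1) = harmonicR m + 1 / ((m : ℝ) + 1) := by
  simp [harmonicR, Finset.sum_range_succ]

lemma harmonicR_mono : Monotone harmonicR := fun _ _ h =>
  sum_le_sum_of_subset_of_nonneg (range_subset_range.2 h) fun _ _ _ => by positivity

noncomputable def harmonicCross (a b : ℕ) : ℝ := a * harmonicR b + b * harmonicR a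

lemma harmonicCross_comm (a b : ℕ) : harmonicCross a b = harmonicCross b a := by
  unfold harmonicCross; ring

lemma harmonicCross_self (k : ℕ) : harmonicCross k k = 2 * k * harmonicR k := by
  unfold harmonicCross; ring

lemma harmonicCross_le_succ_pred {a b : ℕ} (hab : a ≤ b) :
    harmonicCross a (b + 1) ≤ harmonicCross (a + 1) b := by
  have hH : harmonicR a ≤ harmonicR b := harmonicR_mono hab
  have hfrac : (a : ℝ) / (b + 1) ≤ b / (a + 1) := by
    have : (a : ℝ) ≤ b := by exact_mod_cast hab
    rw [div_le_div_iff₀ (by positivity) (by positivity)]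
    nlinarith
  calc harmonicCross a (b + 1)
      = a * harmonicR b + b * harmonicR a + (a / (b + 1) + harmonicR a) := by
        simp only [harmonicCross, harmonicR_succ]; push_cast; field_simp; ring
    _ ≤ a * harmonicR b + b * harmonicR a + (b / (a + 1) + harmonicR b) := by gcongr
    _ = harmonicCross (a + 1) b := by
        simp only [harmonicCross, harmonicR_succ]; push_cast; field_simp; ring

lemma harmonicCross_le_of_add_eq {a k : ℕ} (d : ℕ) (h : a + d = k) :
    harmonicCross a (k + d) ≤ 2 * k * harmonicR k := by
  induction d generalizing a with
  | zero => simp [← h, harmonicCross_self]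
  | succ d ih =>
    calc harmonicCross a (k + d + 1)
        ≤ harmonicCross (a + 1) (k + d) := harmonicCross_le_succ_pred (by omega)
      _ ≤ 2 * k * harmonicR k := ih (by omega)

lemma harmonicCross_le_balanced {a b k : ℕ} (h : a + b = 2 * k) :
    harmonicCross a b ≤ 2 * k * harmonicR k := by
  wlog hab : a ≤ b generalizing a b
  · rw [harmonicCross_comm]; exact this (by omega) (by omega)
  obtain rfl : b = k + (k - a) := by omega
  exact harmonicCross_le_of_add_eq (k - a) (by omega)

theorem stmt7_general (n : ℕ) (he : Even n)
    (θ : ℕ → ℝ) (hθ : ∀ m, m ≤ n → θ m = (m : ℝ) * harmonicR (n - m) + ((n : ℝ) - (m : ℝ)) * harmonicR m) :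
    θ (n / 2) = (n : ℝ) * harmonicR (n / 2) ∧
    ∀ l : ℕ, l ≤ n → θ l ≤ (n : ℝ) * harmonicR (n / 2) := by
  obtain ⟨k, rfl⟩ := he
  have hk : (k + k) / 2 = k := by omega
  have hθ' : ∀ l ≤ k + k, θ l = harmonicCross l (k + k - l) := fun l hl => by
    rw [hθ l hl, harmonicCross, Nat.cast_sub hl]
  have hn : ((k + k : ℕ) : ℝ) = 2 * k := by push_cast; ring
  rw [hk, hn]
  refine ⟨?_, fun l hl => ?_⟩
  · rw [hθ' k (by omega), Nat.add_sub_cancel, harmonicCross_self]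
  · rw [hθ' l hl]
    exact harmonicCross_le_balanced (by omega)

theorem stmt7 (n : ℕ) (hn : 0 < n) (he : Even n)
    (θ : ℕ → ℝ) (hθ : ∀ m, m ≤ n → θ m = (m : ℝ) * harmonicR (n - m) + ((n : ℝ) - (m : ℝ)) * harmonicR m) :
    θ (n / 2) = (n : ℝ) * harmonicR (n / 2) ∧
    ∀ l : ℕ, l ≤ n → θ l ≤ (n : ℝ) * harmonicR (n / 2) :=
  stmt7_general n he θ hθ
end

section
/- With x_n = (n − H_n)/(H_n − 1), the quantity (n + x_n)/(n + x_n − H_n) · H((n + x_n)/2) tends to have difference from H(n/2) going to 0 as n → ∞; formally, for every ε > 0 there exists n(ε) such that for all n ≥ n(ε), (n + x_n)/(n + x_n − H_n) · H((n + x_n)/2) ≤ H(n/2) + ε. -/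
/-! With `H = H_n` and `s = n + x_n`, one has `s / (s - H) = 1 + (H - 1) / (n - H)`. Since the
integrand of `H(b)` exceeds that of `H(a)` by at most `(b - a) x ^ a`, `H(s / 2)` exceeds
`H(n / 2)` by at most `x_n / (n + 2) ≤ 1 / (H - 1)`, while `H(s / 2) ≤ H(n) = H`. The left side is
therefore at most `H(n / 2) + 1 / (H - 1) + (H - 1) H / (n - H)`, and both error terms tend to `0`
because `H_n → ∞` and `H_n ^ 2 = o(n)`. -/

open MeasureTheory Finset Filter

open Real intervalIntegral Topology

lemma harmonicR_eq_harmonic (n : ℕ) : harmonicR n = harmonic n := by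
  simp only [harmonicR, harmonic, Rat.cast_sum, Rat.cast_inv, one_div]
  push_cast
  rfl

lemma harmonicR_nonneg (n : ℕ) : 0 ≤ harmonicR n :=
  sum_nonneg fun i _ => by positivity

lemma one_sub_rpow_le_mul_one_sub {x c : ℝ} (hx : 0 ≤ x) (hc : 1 ≤ c) :
    1 - x ^ c ≤ c * (1 - x) := by
  have := one_add_mul_self_le_rpow_one_add (s := x - 1) (by linarith) hc
  rw [add_sub_cancel] at this
  linarith

lemma rpow_div_one_sub_nonneg {k x : ℝ} (hk : 0 ≤ k) (hx : x ∈ Set.Icc (0 : ℝ) 1) :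
    0 ≤ (1 - x ^ k) / (1 - x) :=
  div_nonneg (by linarith [rpow_le_one hx.1 hx.2 hk]) (by linarith [hx.2])

lemma rpow_div_one_sub_le {k x : ℝ} (hk : 1 ≤ k) (hx : x ∈ Set.Icc (0 : ℝ) 1) :
    (1 - x ^ k) / (1 - x) ≤ k := by
  rcases hx.2.lt_or_eq with hx1 | rfl
  · rw [div_le_iff₀ (by linarith)]
    exact one_sub_rpow_le_mul_one_sub hx.1 hk
  · simp only [sub_self, div_zero]
    linarith

lemma intervalIntegrable_rpow_div_one_sub {k : ℝ} (hk : 1 ≤ k) :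
    IntervalIntegrable (fun x : ℝ => (1 - x ^ k) / (1 - x)) volume 0 1 := by
  rw [intervalIntegrable_iff_integrableOn_Icc_of_le zero_le_one]
  refine Integrable.mono' (integrableOn_const (by simp)) ?_ ?_ (g := fun _ => k)
  · exact ((measurable_const.sub (continuous_rpow_const (by linarith)).measurable).div
      (measurable_const.sub measurable_id)).aestronglyMeasurable
  · filter_upwards [ae_restrict_mem measurableSet_Icc] with x hx
    rw [norm_eq_abs, abs_of_nonneg (rpow_div_one_sub_nonneg (by linarith) hx)]
    exact rpow_div_one_sub_le hk hx

lemma Hext_mono {a b : ℝ} (ha : 1 ≤ a) (hab : a ≤ b) : Hext a ≤ Hext b := by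
  refine integral_mono_on zero_le_one (intervalIntegrable_rpow_div_one_sub ha)
    (intervalIntegrable_rpow_div_one_sub (ha.trans hab)) fun x hx => ?_
  rcases hx.2.lt_or_eq with hx1 | rfl
  · refine div_le_div_of_nonneg_right ?_ (by linarith)
    rcases hx.1.lt_or_eq with hx0 | rfl
    · linarith [rpow_le_rpow_of_exponent_ge hx0 hx1.le hab]
    · rw [zero_rpow (by linarith), zero_rpow (by linarith)]
  · simp

/-- The integrand of `Hext b` exceeds that of `Hext a` by `x ^ a (1 - x ^ (b - a)) / (1 - x)`,
which Bernoulli's inequality bounds by `(b - a) x ^ a`. -/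
lemma Hext_le_add {a b : ℝ} (ha : 1 ≤ a) (hab : a + 1 ≤ b) :
    Hext b ≤ Hext a + (b - a) / (a + 1) := by
  have hpow : IntervalIntegrable (fun x : ℝ => (b - a) * x ^ a) volume 0 1 :=
    (continuous_const.mul (continuous_rpow_const (by linarith))).intervalIntegrable 0 1
  have hbound : ∫ x in (0 : ℝ)..1, ((1 - x ^ a) / (1 - x) + (b - a) * x ^ a)
      = Hext a + (b - a) / (a + 1) := by
    rw [integral_add (intervalIntegrable_rpow_div_one_sub ha) hpow,
      intervalIntegral.integral_const_mul,
      integral_rpow (Or.inl (by linarith)), one_rpow, zero_rpow (by linarith), Hext]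
    ring
  rw [← hbound]
  refine integral_mono_on zero_le_one (intervalIntegrable_rpow_div_one_sub (by linarith))
    ((intervalIntegrable_rpow_div_one_sub ha).add hpow) fun x hx => ?_
  rcases hx.2.lt_or_eq with hx1 | rfl
  · have hsplit : x ^ b = x ^ a * x ^ (b - a) := by
      rw [← rpow_add' hx.1 (by linarith), add_sub_cancel]
    have := mul_le_mul_of_nonneg_left (one_sub_rpow_le_mul_one_sub hx.1 (by linarith : 1 ≤ b - a))
      (rpow_nonneg hx.1 a)
    rw [div_add' _ _ _ (by linarith), hsplit]
    exact div_le_div_of_nonneg_right (by linarith) (by linarith)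
  · simp only [one_rpow, sub_self, div_zero, zero_add, mul_one]
    linarith

lemma Hext_natCast (n : ℕ) : Hext n = harmonicR n := by
  have hgeom : ∫ x in (0 : ℝ)..1, (1 - x ^ (n : ℝ)) / (1 - x)
      = ∫ x in (0 : ℝ)..1, ∑ i ∈ range n, x ^ i := by
    refine integral_congr_ae ?_
    filter_upwards [measure_eq_zero_iff_ae_notMem.mp (volume_singleton (a := (1 : ℝ)))]
      with x hx _
    have hx1 : x - 1 ≠ 0 := sub_ne_zero.mpr hx
    rw [rpow_natCast, geom_sum_eq (sub_ne_zero.mp hx1), ← neg_sub x 1, ← neg_sub (x ^ n) 1,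
      neg_div_neg_eq]
  rw [Hext, hgeom, integral_finsetSum fun i _ => (continuous_pow i).intervalIntegrable 0 1]
  refine sum_congr rfl fun i _ => ?_
  simp [integral_pow]

lemma tendsto_harmonicR_atTop : Tendsto harmonicR atTop atTop := by
  refine tendsto_atTop_mono (fun n => ?_) <| tendsto_log_atTop.comp
    (tendsto_natCast_atTop_atTop.atTop_add (tendsto_const_nhds (x := (1 : ℝ))))
  simpa [harmonicR_eq_harmonic] using log_add_one_le_harmonic n

lemma tendsto_harmonicR_sq_div_atTop :
    Tendsto (fun n : ℕ => harmonicR n ^ 2 / n) atTop (𝓝 0) := by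
  have hlittle : (fun x : ℝ => (1 + log x) ^ 2) =o[atTop] id := by
    simp only [add_sq, one_pow, mul_one]
    exact ((Asymptotics.isLittleO_const_id_atTop 1).add
      (isLittleO_log_id_atTop.const_mul_left 2)).add isLittleO_pow_log_id_atTop
  refine squeeze_zero (fun n => by positivity) (fun n => ?_)
    (hlittle.tendsto_div_nhds_zero.comp tendsto_natCast_atTop_atTop)
  refine div_le_div_of_nonneg_right (pow_le_pow_left₀ (harmonicR_nonneg n) ?_ 2) n.cast_nonneg
  simpa [harmonicR_eq_harmonic] using harmonic_le_one_add_log n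

lemma tendsto_harmonicR_div_atTop : Tendsto (fun n : ℕ => harmonicR n / n) atTop (𝓝 0) := by
  refine squeeze_zero'
    (Eventually.of_forall fun n => div_nonneg (harmonicR_nonneg n) n.cast_nonneg) ?_
    tendsto_harmonicR_sq_div_atTop
  filter_upwards [tendsto_harmonicR_atTop.eventually_ge_atTop 1] with n hn
  exact div_le_div_of_nonneg_right (by nlinarith) n.cast_nonneg

lemma tendsto_mul_harmonicR_div_sub_atTop :
    Tendsto (fun n : ℕ => (harmonicR n - 1) * harmonicR n / (n - harmonicR n)) atTop (𝓝 0) := by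
  have hlim := (tendsto_harmonicR_sq_div_atTop.sub tendsto_harmonicR_div_atTop).div
    (tendsto_const_nhds.sub tendsto_harmonicR_div_atTop) (by norm_num : (1 : ℝ) - 0 ≠ 0)
  rw [sub_zero, zero_div] at hlim
  refine hlim.congr' ?_
  filter_upwards [eventually_gt_atTop 0] with n hn
  have hn0 : (n : ℝ) ≠ 0 := Nat.cast_ne_zero.mpr hn.ne'
  rw [Pi.div_apply, ← sub_div, one_sub_div hn0, div_div_div_cancel_right₀ hn0]
  ring

lemma tendsto_one_div_harmonicR_sub_one_atTop :
    Tendsto (fun n : ℕ => 1 / (harmonicR n - 1)) atTop (𝓝 0) := by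
  simpa only [one_div, Function.comp_def, sub_eq_add_neg] using tendsto_inv_atTop_zero.comp
    (tendsto_atTop_add_const_right _ (-1) tendsto_harmonicR_atTop)

noncomputable def harmonicOffset (n : ℕ) : ℝ := (n - harmonicR n) / (harmonicR n - 1)

lemma mul_Hext_half_le (n : ℕ) (hH : 2 ≤ harmonicR n) (hn : 3 * harmonicR n ≤ n) :
    (n + harmonicOffset n) / (n + harmonicOffset n - harmonicR n) *
        Hext ((n + harmonicOffset n) / 2) ≤
      Hext (n / 2) + 1 / (harmonicR n - 1) +
        (harmonicR n - 1) * harmonicR n / (n - harmonicR n) := by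
  set H := harmonicR n with hHdef
  set x := harmonicOffset n
  have hH1 : 0 < H - 1 := by linarith
  have hnH : 0 < (n : ℝ) - H := by linarith
  have hx : x * (H - 1) = n - H := div_mul_cancel₀ _ hH1.ne'
  have hx2 : 2 ≤ x := by nlinarith
  have hxn : x ≤ n := by nlinarith
  have hratio : (n + x) / (n + x - H) = 1 + (H - 1) / (n - H) := by
    rw [eq_comm, one_add_div hnH.ne', div_eq_div_iff hnH.ne' (by linarith)]
    linear_combination hx
  have hshift : Hext ((n + x) / 2) ≤ Hext (n / 2) + 1 / (H - 1) := by
    refine (Hext_le_add (by linarith) (by linarith)).trans (add_le_add_right ?_ _)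
    rw [div_le_div_iff₀ (by linarith) hH1]
    nlinarith
  have hmono : Hext ((n + x) / 2) ≤ H := by
    rw [hHdef, ← Hext_natCast]
    exact Hext_mono (by linarith) (by linarith)
  calc (n + x) / (n + x - H) * Hext ((n + x) / 2)
      = Hext ((n + x) / 2) + (H - 1) / (n - H) * Hext ((n + x) / 2) := by rw [hratio]; ring
    _ ≤ Hext (n / 2) + 1 / (H - 1) + (H - 1) / (n - H) * H :=
        add_le_add hshift (mul_le_mul_of_nonneg_left hmono (by positivity))
    _ = Hext (n / 2) + 1 / (H - 1) + (H - 1) * H / (n - H) := by ring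

theorem stmt10 : ∀ ε : ℝ, 0 < ε → ∃ N : ℕ, ∀ n : ℕ, N ≤ n →
    (((n : ℝ) + ((n : ℝ) - harmonicR n) / (harmonicR n - 1)) /
        (((n : ℝ) + ((n : ℝ) - harmonicR n) / (harmonicR n - 1)) - harmonicR n)) *
      Hext (((n : ℝ) + ((n : ℝ) - harmonicR n) / (harmonicR n - 1)) / 2) ≤
    Hext ((n : ℝ) / 2) + ε := by
  intro ε hε
  have herror := tendsto_one_div_harmonicR_sub_one_atTop.add tendsto_mul_harmonicR_div_sub_atTop
  rw [add_zero] at herror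
  obtain ⟨N, hN⟩ := eventually_atTop.mp <|
    (tendsto_harmonicR_atTop.eventually_ge_atTop 2).and <|
    (tendsto_harmonicR_div_atTop.eventually_le_const (by norm_num : (0 : ℝ) < 1 / 3)).and <|
    (eventually_gt_atTop 0).and (herror.eventually_le_const hε)
  refine ⟨N, fun n hn => ?_⟩
  obtain ⟨hH, hHn, hn0, hsmall⟩ := hN n hn
  rw [div_le_iff₀ (Nat.cast_pos.mpr hn0)] at hHn
  have := mul_Hext_half_le n hH (by linarith)
  rw [harmonicOffset] at this
  linarith
end
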